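/- arXiv:1502.05903 — 3 statements merged into one kernel-verified Lean document; each statement's English description precedes it below -/
import Mathlib

section
/- For all positive real numbers L₁, L₂, A₁, A₂, A₃, we have (L₁+L₂)·(1/(A₁+A₂) + 1/A₃) > min{ L₁·(1/A₁ + 1/(A₂+A₃)), L₂·(1/A₂ + 1/(A₁+A₃)) }. -/
/-!
Write `x = 1/(A₁+A₂) + 1/A₃`, `y₁ = 1/A₁ + 1/(A₂+A₃)`, `y₂ = 1/A₂ + 1/(A₁+A₃)`. With
`S = A₁+A₂+A₃` one has `1/x = A₃(A₁+A₂)/S`, `1/y₁ = A₁(A₂+A₃)/S`, `1/y₂ = A₂(A₁+A₃)/S`, so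
`1/y₁ + 1/y₂ - 1/x = 2A₁A₂/S > 0`. Then, for `m = min (L₁ y₁) (L₂ y₂)`, we have `L₁ ≥ m/y₁` and
`L₂ ≥ m/y₂`, hence `(L₁+L₂) x ≥ m x (1/y₁ + 1/y₂) > m`.
-/

theorem inv_add_inv_inv_lt {A₁ A₂ A₃ : ℝ} (hA₁ : 0 < A₁) (hA₂ : 0 < A₂) (hA₃ : 0 < A₃) :
    ((A₁ + A₂)⁻¹ + A₃⁻¹)⁻¹ < (A₁⁻¹ + (A₂ + A₃)⁻¹)⁻¹ + (A₂⁻¹ + (A₁ + A₃)⁻¹)⁻¹ := by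
  rw [inv_add_inv (by positivity) hA₃.ne', inv_add_inv hA₁.ne' (by positivity),
    inv_add_inv hA₂.ne' (by positivity), inv_div, inv_div, inv_div,
    show A₁ + (A₂ + A₃) = A₁ + A₂ + A₃ by ring, show A₂ + (A₁ + A₃) = A₁ + A₂ + A₃ by ring,
    ← add_div, div_lt_div_iff_of_pos_right (by positivity)]
  nlinarith [mul_pos hA₁ hA₂]

theorem min_mul_lt_add_mul {L₁ L₂ x y₁ y₂ : ℝ} (hL₁ : 0 < L₁) (hL₂ : 0 < L₂) (hx : 0 < x)
    (hy₁ : 0 < y₁) (hy₂ : 0 < y₂) (h : x⁻¹ < y₁⁻¹ + y₂⁻¹) :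
    min (L₁ * y₁) (L₂ * y₂) < (L₁ + L₂) * x := by
  set m := min (L₁ * y₁) (L₂ * y₂)
  have hm : 0 < m := lt_min (by positivity) (by positivity)
  have h₁ : m / y₁ ≤ L₁ := (div_le_iff₀ hy₁).2 (min_le_left _ _)
  have h₂ : m / y₂ ≤ L₂ := (div_le_iff₀ hy₂).2 (min_le_right _ _)
  calc m = m * x⁻¹ * x := by field_simp
    _ < m * (y₁⁻¹ + y₂⁻¹) * x := by gcongr
    _ = (m / y₁ + m / y₂) * x := by ring
    _ ≤ (L₁ + L₂) * x := by gcongr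

theorem stmt_0 (L₁ L₂ A₁ A₂ A₃ : ℝ) (hL₁ : 0 < L₁) (hL₂ : 0 < L₂)
    (hA₁ : 0 < A₁) (hA₂ : 0 < A₂) (hA₃ : 0 < A₃) :
    (L₁ + L₂) * (1 / (A₁ + A₂) + 1 / A₃) >
      min (L₁ * (1 / A₁ + 1 / (A₂ + A₃))) (L₂ * (1 / A₂ + 1 / (A₁ + A₃))) := by
  simp only [one_div]
  exact min_mul_lt_add_mul hL₁ hL₂ (by positivity) (by positivity) (by positivity)
    (inv_add_inv_inv_lt hA₁ hA₂ hA₃)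
end

section
/- For all positive real numbers L₁, L₂, A₁, A₂, A₃, we have (L₁+L₂)²·(1/(A₁+A₂) + 1/A₃) > min{ L₁²·(1/A₁ + 1/(A₂+A₃)), L₂²·(1/A₂ + 1/(A₁+A₃)) }. -/
/-!
Write `F₁, F₂, F₃` for the three area factors. If `(L₁ + L₂)² F₃` were at most both
`L₁² F₁` and `L₂² F₂`, then `(L₁ + L₂)² F₃ (1/F₁ + 1/F₂) ≤ L₁² + L₂² < (L₁ + L₂)²`, i.e.
`F₃ (F₁ + F₂) < F₁ F₂`. But clearing denominators gives
`F₃ (F₁ + F₂) - F₁ F₂ = 2 (A₁ + A₂ + A₃)² / ((A₂ + A₃)(A₁ + A₃)(A₁ + A₂) A₃) > 0`.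
-/

lemma mul_lt_of_le_sq_mul_of_le_sq_mul {a b c L₁ L₂ : ℝ} (hL₁ : 0 < L₁) (hL₂ : 0 < L₂)
    (ha : 0 < a) (hb : 0 < b) (h₁ : (L₁ + L₂) ^ 2 * c ≤ L₁ ^ 2 * a)
    (h₂ : (L₁ + L₂) ^ 2 * c ≤ L₂ ^ 2 * b) : c * (a + b) < a * b := by
  have hsum : (L₁ + L₂) ^ 2 * (c * (a + b)) ≤ (L₁ ^ 2 + L₂ ^ 2) * (a * b) := by
    nlinarith [mul_le_mul_of_nonneg_right h₁ hb.le, mul_le_mul_of_nonneg_right h₂ ha.le]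
  have hsq : (L₁ ^ 2 + L₂ ^ 2) * (a * b) < (L₁ + L₂) ^ 2 * (a * b) := by
    have : L₁ ^ 2 + L₂ ^ 2 < (L₁ + L₂) ^ 2 := by nlinarith [mul_pos hL₁ hL₂]
    exact mul_lt_mul_of_pos_right this (mul_pos ha hb)
  exact lt_of_mul_lt_mul_left (hsum.trans_lt hsq) (sq_nonneg _)

lemma min_sq_mul_lt_add_sq_mul {a b c L₁ L₂ : ℝ} (hL₁ : 0 < L₁) (hL₂ : 0 < L₂)
    (ha : 0 < a) (hb : 0 < b) (h : a * b ≤ c * (a + b)) :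
    min (L₁ ^ 2 * a) (L₂ ^ 2 * b) < (L₁ + L₂) ^ 2 * c := by
  by_contra! hc
  rw [le_min_iff] at hc
  exact (mul_lt_of_le_sq_mul_of_le_sq_mul hL₁ hL₂ ha hb hc.1 hc.2).not_ge h

lemma area_factor_mul_lt {A₁ A₂ A₃ : ℝ} (hA₁ : 0 < A₁) (hA₂ : 0 < A₂) (hA₃ : 0 < A₃) :
    (1 / A₁ + 1 / (A₂ + A₃)) * (1 / A₂ + 1 / (A₁ + A₃)) <
      (1 / (A₁ + A₂) + 1 / A₃) * ((1 / A₁ + 1 / (A₂ + A₃)) + (1 / A₂ + 1 / (A₁ + A₃))) := by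
  have hdiff : (1 / (A₁ + A₂) + 1 / A₃) * ((1 / A₁ + 1 / (A₂ + A₃)) + (1 / A₂ + 1 / (A₁ + A₃)))
      - (1 / A₁ + 1 / (A₂ + A₃)) * (1 / A₂ + 1 / (A₁ + A₃))
      = 2 * (A₁ + A₂ + A₃) ^ 2 / ((A₂ + A₃) * (A₁ + A₃) * (A₁ + A₂) * A₃) := by
    field_simp
    ring
  have : 0 < 2 * (A₁ + A₂ + A₃) ^ 2 / ((A₂ + A₃) * (A₁ + A₃) * (A₁ + A₂) * A₃) := by
    positivity
  linarith

theorem stmt_1 (L₁ L₂ A₁ A₂ A₃ : ℝ) (hL₁ : 0 < L₁) (hL₂ : 0 < L₂)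
    (hA₁ : 0 < A₁) (hA₂ : 0 < A₂) (hA₃ : 0 < A₃) :
    (L₁ + L₂) ^ 2 * (1 / (A₁ + A₂) + 1 / A₃) >
      min (L₁ ^ 2 * (1 / A₁ + 1 / (A₂ + A₃))) (L₂ ^ 2 * (1 / A₂ + 1 / (A₁ + A₃))) :=
  min_sq_mul_lt_add_sq_mul hL₁ hL₂ (by positivity) (by positivity)
    (area_factor_mul_lt hA₁ hA₂ hA₃).le
end

section
/- Let A > 0 and let I : (0,A) → [0,∞) with I(V) = I(A−V). Suppose liminf_{V→0⁺} I(V)^{n+1}/V^n ≥ C₂ > 0 for some integer n ≥ 1, and that inf_{V∈(0,A)} I(V)^{n+1}·(1/V + 1/(A−V))^n < C₂. Then any sequence V_i ∈ (0,A) with I(V_i)^{n+1}·(1/V_i + 1/(A−V_i))^n converging to this infimum stays in a compact subinterval [δ, A−δ] for some δ > 0 (after discarding finitely many terms). -/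
/-!
Near `0` the ratio dominates `I(V)^{n+1}/V^n`, whose liminf is at least `C₂`; by the symmetry
`V ↦ A - V` it is also large near `A`. So for any level `c` strictly between the infimum and `C₂`,
the sublevel set `{V | ratio V ≤ c}` keeps a fixed distance `δ` from both endpoints, and a
minimizing sequence eventually lies in that sublevel set.
-/

open Filter Set Topology

noncomputable section

def isoperimetricRatio (A : ℝ) (n : ℕ) (I : ℝ → ℝ) (V : ℝ) : ℝ :=
  I V ^ (n + 1) * (1 / V + 1 / (A - V)) ^ n

variable {A : ℝ} {n : ℕ} {I : ℝ → ℝ}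

lemma isoperimetricRatio_sub (hsym : ∀ V ∈ Ioo 0 A, I V = I (A - V)) {V : ℝ}
    (hV : V ∈ Ioo 0 A) :
    isoperimetricRatio A n I (A - V) = isoperimetricRatio A n I V := by
  rw [isoperimetricRatio, isoperimetricRatio, ← hsym V hV, sub_sub_cancel,
    add_comm (1 / (A - V))]

lemma div_pow_le_isoperimetricRatio {V : ℝ} (hV : V ∈ Ioo 0 A) (hI : 0 ≤ I V) :
    I V ^ (n + 1) / V ^ n ≤ isoperimetricRatio A n I V := by
  have hAV : 0 < A - V := sub_pos.2 hV.2
  rw [isoperimetricRatio, div_eq_mul_one_div, ← one_div_pow]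
  gcongr
  · exact one_div_nonneg.2 hV.1.le
  · exact le_add_of_nonneg_right (one_div_pos.2 hAV).le

lemma exists_forall_lt_isoperimetricRatio_of_lt_liminf
    (hnonneg : ∀ V ∈ Ioo 0 A, 0 ≤ I V) {c : ℝ}
    (hc : c < liminf (fun V => I V ^ (n + 1) / V ^ n) (𝓝[Ioo 0 A] 0)) :
    ∃ δ > 0, ∀ V ∈ Ioo 0 A, V < δ → c < isoperimetricRatio A n I V := by
  have hbdd : IsBoundedUnder (· ≥ ·) (𝓝[Ioo 0 A] 0) (fun V => I V ^ (n + 1) / V ^ n) :=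
    isBoundedUnder_of_eventually_ge <| eventually_nhdsWithin_of_forall fun V hV =>
      div_nonneg (pow_nonneg (hnonneg V hV) _) (pow_nonneg hV.1.le _)
  obtain ⟨δ, hδ, hball⟩ :=
    Metric.mem_nhdsWithin_iff.1 (eventually_lt_of_lt_liminf hc hbdd)
  refine ⟨δ, hδ, fun V hV hVδ => (hball ⟨?_, hV⟩).trans_le
    (div_pow_le_isoperimetricRatio hV (hnonneg V hV))⟩
  rwa [Metric.mem_ball, Real.dist_0_eq_abs, abs_of_pos hV.1]

lemma exists_sublevel_subset_Icc (hnonneg : ∀ V ∈ Ioo 0 A, 0 ≤ I V)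
    (hsym : ∀ V ∈ Ioo 0 A, I V = I (A - V)) {c : ℝ}
    (hc : c < liminf (fun V => I V ^ (n + 1) / V ^ n) (𝓝[Ioo 0 A] 0)) :
    ∃ δ > 0, ∀ V ∈ Ioo 0 A, isoperimetricRatio A n I V ≤ c → V ∈ Icc δ (A - δ) := by
  obtain ⟨δ, hδ, hsmall⟩ := exists_forall_lt_isoperimetricRatio_of_lt_liminf hnonneg hc
  refine ⟨δ, hδ, fun V hV hVc => ⟨?_, ?_⟩⟩
  · by_contra! hVδ
    exact (hsmall V hV hVδ).not_ge hVc
  · by_contra! hVδ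
    have hAV : A - V ∈ Ioo 0 A := ⟨sub_pos.2 hV.2, sub_lt_self A hV.1⟩
    have := hsmall (A - V) hAV (by linarith)
    rw [isoperimetricRatio_sub hsym hV] at this
    exact this.not_ge hVc

end

theorem stmt_7_general (A C₂ : ℝ) (n : ℕ)
    (I : ℝ → ℝ)
    (hnonneg : ∀ V ∈ Set.Ioo 0 A, 0 ≤ I V)
    (hsym : ∀ V ∈ Set.Ioo 0 A, I V = I (A - V))
    (hliminf :
      Filter.liminf (fun V => I V ^ (n + 1) / V ^ n) (nhdsWithin 0 (Set.Ioo 0 A)) ≥ C₂)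
    (hinf :
      sInf ((fun V => I V ^ (n + 1) * (1 / V + 1 / (A - V)) ^ n) '' Set.Ioo 0 A) < C₂)
    (V : ℕ → ℝ) (hV : ∀ i, V i ∈ Set.Ioo 0 A)
    (hconv : Filter.Tendsto (fun i => I (V i) ^ (n + 1) * (1 / (V i) + 1 / (A - V i)) ^ n)
      Filter.atTop
      (nhds (sInf ((fun V => I V ^ (n + 1) * (1 / V + 1 / (A - V)) ^ n) '' Set.Ioo 0 A)))) :
    ∃ δ > 0, ∃ N : ℕ, ∀ i ≥ N, V i ∈ Set.Icc δ (A - δ) := by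
  obtain ⟨c, hmc, hcC⟩ := exists_between hinf
  obtain ⟨δ, hδ, hsub⟩ := exists_sublevel_subset_Icc hnonneg hsym (hcC.trans_le hliminf)
  obtain ⟨N, hN⟩ := eventually_atTop.1 (hconv.eventually_lt_const hmc)
  exact ⟨δ, hδ, N, fun i hi => hsub (V i) (hV i) (hN i hi).le⟩

theorem stmt_7 (A C₂ : ℝ) (hA : 0 < A) (hC₂ : 0 < C₂) (n : ℕ) (hn : 1 ≤ n)
    (I : ℝ → ℝ)
    (hnonneg : ∀ V ∈ Set.Ioo 0 A, 0 ≤ I V)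
    (hsym : ∀ V ∈ Set.Ioo 0 A, I V = I (A - V))
    (hliminf :
      Filter.liminf (fun V => I V ^ (n + 1) / V ^ n) (nhdsWithin 0 (Set.Ioo 0 A)) ≥ C₂)
    (hinf :
      sInf ((fun V => I V ^ (n + 1) * (1 / V + 1 / (A - V)) ^ n) '' Set.Ioo 0 A) < C₂)
    (V : ℕ → ℝ) (hV : ∀ i, V i ∈ Set.Ioo 0 A)
    (hconv : Filter.Tendsto (fun i => I (V i) ^ (n + 1) * (1 / (V i) + 1 / (A - V i)) ^ n)
      Filter.atTop
      (nhds (sInf ((fun V => I V ^ (n + 1) * (1 / V + 1 / (A - V)) ^ n) '' Set.Ioo 0 A)))) :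
    ∃ δ > 0, ∃ N : ℕ, ∀ i ≥ N, V i ∈ Set.Icc δ (A - δ) :=
  stmt_7_general A C₂ n I hnonneg hsym hliminf hinf V hV hconv
end
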